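/- For every α > 0, the standardized call function χ_α is strictly convex on (0,1] and strictly concave on [1,+∞). -/

import Mathlib

/-!
Writing `φ(u) = e^{-u²/2}/√(2π)`, the identity `(x + 1/x)² - (x - 1/x)² = 4` gives
`e^{α²/2} φ(α/2 (x + 1/x)) = φ(α/2 (x - 1/x))`, so the two terms of `χ_α'` combine into
`χ_α'(x) = α φ(α/2 (x - 1/x))`. The map `x ↦ x - 1/x` is strictly increasing and vanishes at `1`,
while `φ` is strictly increasing on `(-∞, 0]` and strictly decreasing on `[0, ∞)`; hence `χ_α'` is
strictly increasing on `(0, 1)` and strictly decreasing on `(1, ∞)`.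
-/

open Real Filter Set

noncomputable def stdNormalCDF (x : ℝ) : ℝ :=
  (Real.sqrt (2 * Real.pi))⁻¹ * ∫ t in Set.Iic x, Real.exp (-t ^ 2 / 2)

noncomputable def chi (α x : ℝ) : ℝ :=
  stdNormalCDF (α / 2 * (x - 1 / x)) -
    Real.exp (α ^ 2 / 2) * stdNormalCDF (-(α / 2) * (x + 1 / x))

open MeasureTheory

theorem hasDerivAt_integral_Iic {E : Type*} [NormedAddCommGroup E] [NormedSpace ℝ E]
    [CompleteSpace E] {f : ℝ → E} (hf : Integrable f) {x : ℝ} (hx : ContinuousAt f x) :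
    HasDerivAt (fun y => ∫ t in Iic y, f t) (f x) x := by
  have hsplit : (fun y => ∫ t in Iic y, f t) =
      fun y => (∫ t in Iic 0, f t) + ∫ t in (0 : ℝ)..y, f t := by
    funext y
    rw [← intervalIntegral.integral_Iic_sub_Iic hf.integrableOn hf.integrableOn]
    abel
  rw [hsplit]
  exact (intervalIntegral.integral_hasDerivAt_right hf.intervalIntegrable
    hf.aestronglyMeasurable.stronglyMeasurableAtFilter hx).const_add _

theorem integrable_exp_neg_sq_div_two : Integrable fun t : ℝ => exp (-t ^ 2 / 2) := by
  simpa [neg_div, div_eq_inv_mul] using integrable_exp_neg_mul_sq (b := 1 / 2) (by norm_num)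

theorem hasDerivAt_stdNormalCDF (x : ℝ) :
    HasDerivAt stdNormalCDF ((√(2 * π))⁻¹ * exp (-x ^ 2 / 2)) x :=
  (hasDerivAt_integral_Iic integrable_exp_neg_sq_div_two (by fun_prop)).const_mul _

theorem strictMonoOn_exp_neg_sq_div_two :
    StrictMonoOn (fun u : ℝ => exp (-u ^ 2 / 2)) (Iic 0) := by
  intro a ha b hb hab
  simp only [mem_Iic] at ha hb
  exact exp_lt_exp.mpr (by nlinarith)

theorem strictAntiOn_exp_neg_sq_div_two :
    StrictAntiOn (fun u : ℝ => exp (-u ^ 2 / 2)) (Ici 0) := by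
  intro a ha b hb hab
  simp only [mem_Ici] at ha hb
  exact exp_lt_exp.mpr (by nlinarith)

theorem strictMonoOn_sub_one_div : StrictMonoOn (fun x : ℝ => x - 1 / x) (Ioi 0) := by
  intro x hx y _ hxy
  have := one_div_lt_one_div_of_lt hx hxy
  dsimp only
  linarith

theorem exp_sq_div_two_mul_exp_neg_sq_div_two (α : ℝ) {x : ℝ} (hx : x ≠ 0) :
    exp (α ^ 2 / 2) * exp (-(-(α / 2) * (x + 1 / x)) ^ 2 / 2) =
      exp (-(α / 2 * (x - 1 / x)) ^ 2 / 2) := by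
  rw [← exp_add]
  congr 1
  field_simp
  ring

theorem hasDerivAt_chi (α : ℝ) {x : ℝ} (hx : 0 < x) :
    HasDerivAt (chi α) (α * (√(2 * π))⁻¹ * exp (-(α / 2 * (x - 1 / x)) ^ 2 / 2)) x := by
  have hinv : HasDerivAt (fun y : ℝ => 1 / y) (-(x ^ 2)⁻¹) x := by
    simpa [one_div] using hasDerivAt_inv hx.ne'
  have hsub := ((hasDerivAt_id x).sub hinv).const_mul (α / 2)
  have hadd := ((hasDerivAt_id x).add hinv).const_mul (-(α / 2))
  refine (((hasDerivAt_stdNormalCDF _).comp x hsub).sub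
    (((hasDerivAt_stdNormalCDF _).comp x hadd).const_mul (exp (α ^ 2 / 2)))).congr_deriv ?_
  dsimp only [id, Pi.sub_apply, Pi.add_apply]
  linear_combination (√(2 * π))⁻¹ * (α / 2) * (1 - (x ^ 2)⁻¹) *
    exp_sq_div_two_mul_exp_neg_sq_div_two α hx.ne'

theorem deriv_chi (α : ℝ) {x : ℝ} (hx : 0 < x) :
    deriv (chi α) x = α * (√(2 * π))⁻¹ * exp (-(α / 2 * (x - 1 / x)) ^ 2 / 2) :=
  (hasDerivAt_chi α hx).deriv

theorem continuousOn_chi (α : ℝ) : ContinuousOn (chi α) (Ioi 0) :=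
  fun _ hx => (hasDerivAt_chi α hx).continuousAt.continuousWithinAt

theorem strictMonoOn_deriv_chi {α : ℝ} (hα : 0 < α) :
    StrictMonoOn (deriv (chi α)) (Ioo 0 1) := by
  rintro x ⟨hx0, -⟩ y ⟨hy0, hy1⟩ hxy
  have hu : α / 2 * (x - 1 / x) < α / 2 * (y - 1 / y) :=
    mul_lt_mul_of_pos_left (strictMonoOn_sub_one_div hx0 hy0 hxy) (by positivity)
  have hv : α / 2 * (y - 1 / y) ≤ 0 :=
    mul_nonpos_of_nonneg_of_nonpos (by positivity) (by linarith [one_lt_one_div hy0 hy1])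
  rw [deriv_chi α hx0, deriv_chi α hy0]
  exact mul_lt_mul_of_pos_left
    (strictMonoOn_exp_neg_sq_div_two (hu.le.trans hv) hv hu) (by positivity)

theorem strictAntiOn_deriv_chi {α : ℝ} (hα : 0 < α) :
    StrictAntiOn (deriv (chi α)) (Ioi 1) := by
  rintro x (hx1 : 1 < x) y - hxy
  have hx0 : 0 < x := zero_lt_one.trans hx1
  have hy0 : 0 < y := hx0.trans hxy
  have hu : α / 2 * (x - 1 / x) < α / 2 * (y - 1 / y) :=
    mul_lt_mul_of_pos_left (strictMonoOn_sub_one_div hx0 hy0 hxy) (by positivity)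
  have hv : 0 ≤ α / 2 * (x - 1 / x) :=
    mul_nonneg (by positivity) (by linarith [(div_lt_one hx0).mpr hx1])
  rw [deriv_chi α hx0, deriv_chi α hy0]
  exact mul_lt_mul_of_pos_left
    (strictAntiOn_exp_neg_sq_div_two hv (hv.trans hu.le) hu) (by positivity)

theorem chi_convex_concave (α : ℝ) (hα : 0 < α) :
    StrictConvexOn ℝ (Set.Ioc 0 1) (chi α) ∧
      StrictConcaveOn ℝ (Set.Ici 1) (chi α) := by
  constructor
  · refine StrictMonoOn.strictConvexOn_of_deriv (convex_Ioc 0 1)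
      ((continuousOn_chi α).mono Ioc_subset_Ioi_self) ?_
    rw [interior_Ioc]
    exact strictMonoOn_deriv_chi hα
  · refine StrictAntiOn.strictConcaveOn_of_deriv (convex_Ici 1)
      ((continuousOn_chi α).mono (Ici_subset_Ioi.mpr zero_lt_one)) ?_
    rw [interior_Ici]
    exact strictAntiOn_deriv_chi hα
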